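/- Let {𝔣_i}_{i=1}^n be as in the martingale lemma for the canonical ensemble (pairwise disjoint supports, uniformly bounded by M, vanishing conditional mean). Then there is a universal constant c > 0 such that for every K > 0, the canonical-ensemble probability that |n⁻¹ ∑_{i=1}^n 𝔣_i[η]| ≥ K·M·n^{−1/2} is at most 2·exp(−c·K²). -/

import Mathlib

/-!
Condition the canonical ensemble on the configuration outside `I k`. Since the `I i` are
disjoint, the partial sum `∑_{i<k} f i` is constant on such a conditional class, which is a
canonical ensemble on `I k`; and `f k` has zero mean there. The latter follows from the hypothesis
by removing the sites outside `I k` one at a time: removing a site `x` turns the vanishing of the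
class sums at spin `t + 1` into `H (t) + H (t + 2) = 0` for the class sums `H` of the smaller
box, and `H` vanishes above the size of that box. Hoeffding's lemma on each class then gives
`E exp (λ ∑_{i<n} f i) ≤ exp (n λ² M² / 2)`, and a Chernoff bound with `λ = K / (M √n)` gives the
tail `2 exp (-K² / 2)`.
-/

open Finset

lemma eq_zero_of_add_apply_add_two_eq_zero {G : Type*} [AddGroup G] {H : ℤ → G} (N : ℤ)
    (hN : ∀ u, N < u → H u = 0) (hH : ∀ u, H u + H (u + 2) = 0) (u : ℤ) : H u = 0 := by
  suffices ∀ m ≤ N + 1, ∀ v, m ≤ v → H v = 0 from this (min u (N + 1)) (min_le_right _ _) u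
    (min_le_left _ _)
  intro m hm
  induction m, hm using Int.leInductionDown with
  | base => exact fun v hv => hN v (by omega)
  | pred m _ ih =>
    intro v hv
    rcases hv.lt_or_eq with hv | rfl
    · exact ih v (by omega)
    · rw [eq_neg_of_add_eq_zero_left (hH (m - 1)), ih _ (by omega), neg_zero]

lemma exp_mul_le_cosh_add_div_mul_sinh {M x : ℝ} (hM : 0 < M) (hx : |x| ≤ M) (l : ℝ) :
    Real.exp (l * x) ≤ Real.cosh (l * M) + x / M * Real.sinh (l * M) := by
  have hxM := abs_le.1 ((abs_div x M).trans_le (by rwa [abs_of_pos hM, div_le_one hM]))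
  have hconv := convexOn_exp.2 (Set.mem_univ (l * M)) (Set.mem_univ (-(l * M)))
    (by linarith : 0 ≤ (1 + x / M) / 2) (by linarith : 0 ≤ (1 - x / M) / 2) (by ring)
  have hpoint : (1 + x / M) / 2 * (l * M) + (1 - x / M) / 2 * -(l * M) = l * x := by
    field_simp; ring
  simp only [smul_eq_mul, hpoint] at hconv
  rw [Real.cosh_eq, Real.sinh_eq]
  linarith

lemma sum_exp_mul_le_of_sum_eq_zero {α : Type*} {S : Finset α} {φ : α → ℝ} {M : ℝ} (hM : 0 < M)
    (hφ : ∀ a ∈ S, |φ a| ≤ M) (hφ0 : ∑ a ∈ S, φ a = 0) (l : ℝ) :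
    ∑ a ∈ S, Real.exp (l * φ a) ≤ #S * Real.exp (l ^ 2 * M ^ 2 / 2) :=
  calc ∑ a ∈ S, Real.exp (l * φ a)
      ≤ ∑ a ∈ S, (Real.cosh (l * M) + φ a / M * Real.sinh (l * M)) :=
        sum_le_sum fun a ha => exp_mul_le_cosh_add_div_mul_sinh hM (hφ a ha) l
    _ = #S * Real.cosh (l * M) := by
        rw [sum_add_distrib, ← sum_mul, ← sum_div, hφ0]; simp
    _ ≤ #S * Real.exp (l ^ 2 * M ^ 2 / 2) := by
        gcongr
        exact (Real.cosh_le_exp_half_sq _).trans_eq (by ring_nf)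

lemma ENNReal.natCast_div_le_ofReal {a b : ℕ} {r : ℝ} (hb : b ≠ 0) (h : (a : ℝ) ≤ r * b) :
    (a : ENNReal) / b ≤ ENNReal.ofReal r := by
  rw [ENNReal.div_le_iff (by exact_mod_cast hb) (ENNReal.natCast_ne_top b),
    ← ENNReal.ofReal_natCast, ← ENNReal.ofReal_natCast b, ← ENNReal.ofReal_mul' (Nat.cast_nonneg b)]
  exact ENNReal.ofReal_le_ofReal h

section Chernoff

variable {α : Type*} {A : Finset α} {S : α → ℝ} {v t : ℝ}

lemma card_filter_le_le_of_sum_exp_le (hv : 0 < v) (ht : 0 ≤ t)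
    (hS : ∀ l, ∑ a ∈ A, Real.exp (l * S a) ≤ #A * Real.exp (l ^ 2 * v / 2)) :
    (#(A.filter (t ≤ S ·)) : ℝ) ≤ #A * Real.exp (-(t ^ 2 / (2 * v))) := by
  have hexp : (t / v) ^ 2 * v / 2 - t / v * t = -(t ^ 2 / (2 * v)) := by field_simp; ring
  set l := t / v
  have hl : 0 ≤ l := div_nonneg ht hv.le
  calc (#(A.filter (t ≤ S ·)) : ℝ)
      = Real.exp (-(l * t)) * ∑ _a ∈ A.filter (t ≤ S ·), Real.exp (l * t) := by
        rw [sum_const, nsmul_eq_mul, ← mul_assoc, mul_comm (Real.exp _), mul_assoc,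
          ← Real.exp_add, neg_add_cancel, Real.exp_zero, mul_one]
    _ ≤ Real.exp (-(l * t)) * ∑ a ∈ A, Real.exp (l * S a) := by
        gcongr ?_ * ?_
        refine (sum_le_sum fun a ha => ?_).trans
          (sum_le_sum_of_subset_of_nonneg (filter_subset _ A) fun a _ _ => (Real.exp_pos _).le)
        exact Real.exp_le_exp.2 (mul_le_mul_of_nonneg_left (mem_filter.1 ha).2 hl)
    _ ≤ Real.exp (-(l * t)) * (#A * Real.exp (l ^ 2 * v / 2)) := by gcongr; exact hS l
    _ = #A * Real.exp (-(t ^ 2 / (2 * v))) := by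
        rw [← hexp, sub_eq_add_neg, Real.exp_add]; ring

lemma card_filter_le_abs_le_of_sum_exp_le (hv : 0 < v) (ht : 0 ≤ t)
    (hS : ∀ l, ∑ a ∈ A, Real.exp (l * S a) ≤ #A * Real.exp (l ^ 2 * v / 2)) :
    (#(A.filter (t ≤ |S ·|)) : ℝ) ≤ 2 * #A * Real.exp (-(t ^ 2 / (2 * v))) := by
  classical
  have hneg : ∀ l, ∑ a ∈ A, Real.exp (l * -S a) ≤ #A * Real.exp (l ^ 2 * v / 2) := fun l => by
    simpa only [neg_mul_comm, neg_sq] using hS (-l)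
  have hsub : A.filter (t ≤ |S ·|) ⊆ A.filter (t ≤ S ·) ∪ A.filter (t ≤ -S ·) := by
    intro a ha
    simp only [mem_union, mem_filter, le_abs] at ha ⊢
    tauto
  calc (#(A.filter (t ≤ |S ·|)) : ℝ)
      ≤ #(A.filter (t ≤ S ·)) + #(A.filter (t ≤ -S ·)) := by
        exact_mod_cast (card_le_card hsub).trans (card_union_le _ _)
    _ ≤ _ := by
        linarith [card_filter_le_le_of_sum_exp_le hv ht hS,
          card_filter_le_le_of_sum_exp_le (S := (-S ·)) hv ht hneg]

end Chernoff

namespace CanonicalEnsemble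

variable {L : Type*}

def spin (B : Finset L) (η : L → Bool) : ℤ := ∑ x ∈ B, if η x then 1 else -1

lemma spin_congr {B : Finset L} {η η' : L → Bool} (h : ∀ x ∈ B, η x = η' x) :
    spin B η = spin B η' :=
  sum_congr rfl fun x hx => by rw [h x hx]

lemma spin_le_card (B : Finset L) (η : L → Bool) : spin B η ≤ #B := by
  calc spin B η ≤ ∑ _x ∈ B, (1 : ℤ) := sum_le_sum fun x _ => by split <;> omega
    _ = #B := by simp

lemma spin_add_spin_compl [Fintype L] [DecidableEq L] (B : Finset L) (η : L → Bool) :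
    spin B η + spin Bᶜ η = spin univ η :=
  sum_add_sum_compl B _

lemma spin_eq_spin_erase_add [DecidableEq L] {B : Finset L} {x : L} (hx : x ∈ B) (η : L → Bool) :
    spin B η = spin (B.erase x) η + if η x then 1 else -1 :=
  (sum_erase_add B _ hx).symm

variable [Fintype L] [DecidableEq L]

def levelSet (s : ℤ) : Finset (L → Bool) := {η | spin univ η = s}

/-- The canonical ensemble on `B` at spin `t` with boundary condition `τ`. -/
def fiber (B : Finset L) (τ : L → Bool) (t : ℤ) : Finset (L → Bool) :=
  {η | (∀ x ∉ B, η x = τ x) ∧ spin B η = t}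

lemma mem_fiber {B : Finset L} {τ η : L → Bool} {t : ℤ} :
    η ∈ fiber B τ t ↔ (∀ x ∉ B, η x = τ x) ∧ spin B η = t := by
  simp [fiber]

lemma levelSet_eq_fiber_univ (s : ℤ) (τ : L → Bool) : levelSet s = fiber univ τ s := by
  ext η; simp [levelSet, mem_fiber]

lemma sum_fiber_congr {B : Finset L} {φ : (L → Bool) → ℝ} (hφ : DependsOn φ B)
    (τ τ' : L → Bool) (t : ℤ) :
    ∑ η ∈ fiber B τ t, φ η = ∑ η ∈ fiber B τ' t, φ η := by
  refine sum_nbij' (fun η x => if x ∈ B then η x else τ' x)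
    (fun η x => if x ∈ B then η x else τ x) ?_ ?_ ?_ ?_ ?_
  all_goals intro η hη
  all_goals simp only [mem_fiber] at hη ⊢
  · exact ⟨fun x hx => if_neg hx, (spin_congr fun x hx => if_pos hx).trans hη.2⟩
  · exact ⟨fun x hx => if_neg hx, (spin_congr fun x hx => if_pos hx).trans hη.2⟩
  · funext x; split_ifs with hx <;> simp [hη.1 x, hx]
  · funext x; split_ifs with hx <;> simp [hη.1 x, hx]
  · exact hφ fun x hx => (if_pos hx).symm

lemma filter_fiber_eq_fiber_erase {C : Finset L} {x : L} (hx : x ∈ C) (τ : L → Bool) (t : ℤ)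
    (b : Bool) :
    (fiber C τ t).filter (· x = b) =
      fiber (C.erase x) (Function.update τ x b) (t - if b then 1 else -1) := by
  ext η
  simp only [mem_filter, mem_fiber, spin_eq_spin_erase_add hx η, mem_erase, not_and_or,
    ne_eq, not_not, Function.update_apply]
  constructor
  · rintro ⟨⟨hout, rfl⟩, rfl⟩
    refine ⟨fun y hy => ?_, by ring⟩
    rcases hy with rfl | hy
    · simp
    · split_ifs with h
      · subst h; simp
      · exact hout y hy
  · rintro ⟨hout, hspin⟩
    have hxb : η x = b := by simpa using hout x (Or.inl rfl)
    refine ⟨⟨fun y hy => ?_, by rw [hspin, hxb]; ring⟩, hxb⟩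
    have hyx : y ≠ x := by rintro rfl; exact hy hx
    simpa [hyx] using hout y (Or.inr hy)

lemma fiber_eq_empty_of_card_lt {B : Finset L} {t : ℤ} (ht : #B < t) (τ : L → Bool) :
    fiber B τ t = ∅ :=
  eq_empty_of_forall_notMem fun η hη => by
    have := spin_le_card B η
    rw [(mem_fiber.1 hη).2] at this
    omega

lemma sum_fiber_erase_eq_zero {C : Finset L} {x : L} (hx : x ∈ C) {φ : (L → Bool) → ℝ}
    (hφ : DependsOn φ (C.erase x)) (hC : ∀ τ t, ∑ η ∈ fiber C τ t, φ η = 0) (τ : L → Bool)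
    (t : ℤ) : ∑ η ∈ fiber (C.erase x) τ t, φ η = 0 := by
  set H : ℤ → ℝ := fun u => ∑ η ∈ fiber (C.erase x) τ u, φ η
  have hsplit (b : Bool) (u : ℤ) :
      ∑ η ∈ (fiber C τ u).filter (· x = b), φ η = H (u - if b then 1 else -1) := by
    rw [filter_fiber_eq_fiber_erase hx, sum_fiber_congr hφ]
  refine eq_zero_of_add_apply_add_two_eq_zero (H := H) #(C.erase x) (fun u hu => ?_)
    (fun u => ?_) t
  · simp [H, fiber_eq_empty_of_card_lt hu]
  · have hsum := hC τ (u + 1)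
    rw [← sum_filter_add_sum_filter_not _ (· x = true)] at hsum
    simp only [Bool.not_eq_true, hsplit, if_true, Bool.false_eq_true, if_false] at hsum
    convert hsum using 3 <;> ring

lemma sum_fiber_eq_zero_of_subset {B C : Finset L} (hBC : B ⊆ C) {φ : (L → Bool) → ℝ}
    (hφ : DependsOn φ B) (hC : ∀ τ t, ∑ η ∈ fiber C τ t, φ η = 0) (τ : L → Bool) (t : ℤ) :
    ∑ η ∈ fiber B τ t, φ η = 0 := by
  induction C using Finset.strongInduction with
  | H C ih =>
    obtain rfl | hlt := hBC.eq_or_ssubset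
    · exact hC τ t
    obtain ⟨x, hxC, hxB⟩ := exists_of_ssubset hlt
    have hBC' : B ⊆ C.erase x := subset_erase.2 ⟨hBC, hxB⟩
    exact ih _ (erase_ssubset hxC) hBC' (sum_fiber_erase_eq_zero hxC (hφ.mono hBC') hC)

lemma sum_fiber_eq_zero {B : Finset L} {φ : (L → Bool) → ℝ} (hφ : DependsOn φ B)
    (h : ∀ s, ∑ η ∈ levelSet s, φ η = 0) (τ : L → Bool) (t : ℤ) :
    ∑ η ∈ fiber B τ t, φ η = 0 :=
  sum_fiber_eq_zero_of_subset (subset_univ B) hφ (fun τ t => levelSet_eq_fiber_univ t τ ▸ h t) τ t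

lemma filter_levelSet_eq_fiber {η₀ : L → Bool} {s : ℤ} (hη₀ : η₀ ∈ levelSet s) (B : Finset L) :
    (levelSet s).filter (fun η => ∀ x ∉ B, η x = η₀ x) = fiber B η₀ (s - spin Bᶜ η₀) := by
  ext η
  simp only [levelSet, mem_filter, mem_univ, true_and, mem_fiber] at hη₀ ⊢
  refine and_comm.trans (and_congr_right fun hout => ?_)
  have hcompl : spin Bᶜ η = spin Bᶜ η₀ := spin_congr fun x hx => hout x (mem_compl.1 hx)
  have := spin_add_spin_compl B η
  have := spin_add_spin_compl B η₀
  omega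

lemma sum_mul_exp_le {B : Finset L} {Φ ψ : (L → Bool) → ℝ} {M : ℝ} (hΦ : DependsOn Φ (↑B)ᶜ)
    (hΦ0 : ∀ η, 0 ≤ Φ η) (hM : 0 < M) (hψ : ∀ η, |ψ η| ≤ M)
    (hψ0 : ∀ τ t, ∑ η ∈ fiber B τ t, ψ η = 0) (s : ℤ) (l : ℝ) :
    ∑ η ∈ levelSet s, Φ η * Real.exp (l * ψ η) ≤
      Real.exp (l ^ 2 * M ^ 2 / 2) * ∑ η ∈ levelSet s, Φ η := by
  set outside : (L → Bool) → {x // x ∉ B} → Bool := fun η x => η x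
  have hmaps : ∀ η ∈ levelSet s, outside η ∈ (levelSet s).image outside :=
    fun η hη => mem_image_of_mem _ hη
  rw [← sum_fiberwise_of_maps_to hmaps, ← sum_fiberwise_of_maps_to hmaps, mul_sum]
  gcongr with τ hτ
  obtain ⟨η₀, hη₀, rfl⟩ := mem_image.1 hτ
  have hclass : (levelSet s).filter (outside · = outside η₀) = fiber B η₀ (s - spin Bᶜ η₀) := by
    rw [← filter_levelSet_eq_fiber hη₀]
    simp [outside, funext_iff]
  have hconst : ∀ η ∈ fiber B η₀ (s - spin Bᶜ η₀), Φ η = Φ η₀ :=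
    fun η hη => hΦ fun x hx => (mem_fiber.1 hη).1 x hx
  rw [hclass, sum_congr rfl hconst, sum_congr rfl fun η hη => by rw [hconst η hη], ← mul_sum]
  calc Φ η₀ * ∑ η ∈ fiber B η₀ (s - spin Bᶜ η₀), Real.exp (l * ψ η)
      ≤ Φ η₀ * (#(fiber B η₀ (s - spin Bᶜ η₀)) * Real.exp (l ^ 2 * M ^ 2 / 2)) := by
        gcongr
        · exact hΦ0 η₀
        · exact sum_exp_mul_le_of_sum_eq_zero hM (fun η _ => hψ η) (hψ0 _ _) l
    _ = _ := by rw [sum_const, nsmul_eq_mul]; ring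

lemma sum_exp_mul_sum_range_le {n : ℕ} {f : ℕ → (L → Bool) → ℝ} {I : ℕ → Finset L} {M : ℝ}
    (hM : 0 < M) (hdisj : ∀ i j, i < n → j < n → i ≠ j → Disjoint (I i) (I j))
    (hdep : ∀ i, i < n → DependsOn (f i) (I i)) (hbd : ∀ i, i < n → ∀ η, |f i η| ≤ M)
    (hzero : ∀ i, i < n → ∀ s, ∑ η ∈ levelSet s, f i η = 0) (s : ℤ) (l : ℝ) :
    ∑ η ∈ levelSet s, Real.exp (l * ∑ i ∈ range n, f i η) ≤
      #(levelSet (L := L) s) * Real.exp (l ^ 2 * (n * M ^ 2) / 2) := by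
  induction n with
  | zero => simp
  | succ n ih =>
    have hpast : DependsOn (fun η => Real.exp (l * ∑ i ∈ range n, f i η)) (↑(I n))ᶜ :=
      fun η η' h => congrArg _ <| congrArg _ <| sum_congr rfl fun i hi => by
        have hi : i < n := mem_range.1 hi
        exact hdep i (by omega) fun x hx =>
          h x (disjoint_left.1 (hdisj i n (by omega) (by omega) hi.ne) hx)
    have hstep := sum_mul_exp_le hpast (fun η => (Real.exp_pos _).le) hM (hbd n (by omega))
      (sum_fiber_eq_zero (hdep n (by omega)) (hzero n (by omega))) s l
    have hprev := ih (fun i j hi hj => hdisj i j (by omega) (by omega))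
      (fun i _ => hdep i (by omega)) (fun i _ => hbd i (by omega))
      (fun i _ => hzero i (by omega))
    simp only [sum_range_succ, mul_add, Real.exp_add]
    calc _ ≤ _ := hstep
      _ ≤ Real.exp (l ^ 2 * M ^ 2 / 2) * (#(levelSet s) * Real.exp (l ^ 2 * (n * M ^ 2) / 2)) := by
          gcongr
      _ = _ := by
          rw [← mul_assoc, mul_comm (Real.exp _), mul_assoc, ← Real.exp_add]
          congr 2
          push_cast
          ring

end CanonicalEnsemble

open CanonicalEnsemble in
open scoped ENNReal in
/-- Azuma-type concentration for the canonical ensemble: there is a universal `c > 0` such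
that, for functions `f i` (for `i < n`) with pairwise disjoint supports `I i`, bounded by
`M > 0`, and with zero mean on every level set of the total spin, the uniform measure on the
canonical ensemble `A = {η | ∑ η_x = s}` of the event
`|n⁻¹ ∑_{i<n} f i| ≥ K · M · n^{-1/2}` is at most `2 exp (-c K²)`. -/
theorem stmt_7 : ∃ c : ℝ, 0 < c ∧
    ∀ (L : Type) (_ : Fintype L) (_ : DecidableEq L)
      (n : ℕ) (f : ℕ → (L → Bool) → ℝ) (I : ℕ → Finset L) (M : ℝ) (s : ℤ),
      0 < n → 0 < M →
      (∀ i j, i < n → j < n → i ≠ j → Disjoint (I i) (I j)) →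
      (∀ i, i < n → ∀ η η' : L → Bool, (∀ x ∈ I i, η x = η' x) → f i η = f i η') →
      (∀ i, i < n → ∀ η, |f i η| ≤ M) →
      (∀ i, i < n → ∀ s' : ℤ,
        ∑ η ∈ Finset.univ.filter
            (fun η : L → Bool => (∑ x : L, (if η x then (1 : ℤ) else -1)) = s'), f i η = 0) →
      ∀ (A : Finset (L → Bool)),
        A = Finset.univ.filter
          (fun η : L → Bool => (∑ x : L, (if η x then (1 : ℤ) else -1)) = s) →
        ∀ (hAne : A.Nonempty) (K : ℝ), 0 < K →
        (PMF.uniformOfFinset A hAne).toMeasure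
            {η : L → Bool |
              K * M / Real.sqrt n ≤ |(n : ℝ)⁻¹ * ∑ i ∈ Finset.range n, f i η|} ≤
          ENNReal.ofReal (2 * Real.exp (-c * K ^ 2)) := by
  refine ⟨1 / 2, by norm_num, ?_⟩
  intro L _ _ n f I M s hn hM hdisj hdep hbd hzero A hA hAne K hK
  have hn' : (0 : ℝ) < n := Nat.cast_pos.2 hn
  have hmgf := sum_exp_mul_sum_range_le hM hdisj hdep hbd hzero s
  have htail := card_filter_le_abs_le_of_sum_exp_le (by positivity)
    (by positivity : 0 ≤ K * M * Real.sqrt n) hmgf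
  have hexponent : (K * M * Real.sqrt n) ^ 2 / (2 * (n * M ^ 2)) = 1 / 2 * K ^ 2 := by
    rw [mul_pow, Real.sq_sqrt hn'.le]; field_simp
  have hevent : ∀ η : L → Bool, K * M / Real.sqrt n ≤ |(n : ℝ)⁻¹ * ∑ i ∈ range n, f i η| ↔
      K * M * Real.sqrt n ≤ |∑ i ∈ range n, f i η| := fun η => by
    have hscale : K * M / Real.sqrt n * n = K * M * Real.sqrt n := by
      rw [div_mul_eq_mul_div, div_eq_iff (Real.sqrt_pos.2 hn').ne', mul_assoc (K * M),
        Real.mul_self_sqrt hn'.le]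
    rw [abs_mul, abs_inv, Nat.abs_cast, ← div_eq_inv_mul, le_div_iff₀ hn', hscale]
  obtain rfl : A = levelSet s := hA
  rw [PMF.toMeasure_uniformOfFinset_apply hAne _ (Set.toFinite _).measurableSet]
  refine ENNReal.natCast_div_le_ofReal hAne.card_pos.ne' ?_
  simp only [Set.mem_ofPred_eq, hevent]
  rw [hexponent] at htail
  rw [neg_mul]
  linarith
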